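/- Let ν > 1 and 1/ν + 1/ν² < F < 2, and set H_R := 1/ν² and H_* := (−ν−1+√(8F²ν⁴+ν²+2ν+1)) H_R/(2(ν+1)). Then for every H ≥ H_*, f_{F,H_R}(H) ≥ F²H_R²(1 − H_*) > 0, where f_{F,H_R}(H) := 2(√H_R+1)²H³ − F²H_R(H_R+√H_R+1)H + F²H_R². -/

import Mathlib

open Real

/-- The cubic `f_{F,H_R}(H) := 2(√H_R+1)²H³ − F²H_R(H_R+√H_R+1)H + F²H_R²`. -/
noncomputable def fCubic (F HR H : ℝ) : ℝ :=
  2 * (Real.sqrt HR + 1) ^ 2 * H ^ 3 - F ^ 2 * HR * (HR + Real.sqrt HR + 1) * H + F ^ 2 * HR ^ 2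

/-! Writing `H_R = 1/ν²`, we have `ν⁴ f_{F,H_R} = g` with
`g(H) = 2ν²(ν+1)²H³ − F²(ν²+ν+1)H + F²`, and `H_*` is the positive root of
`(ν+1)² H (ν²H + 1) = 2ν²F²`. The hypotheses on `F` place `H_*` in `(1/ν², 1)`; there
`g'(H_*) ≥ 0`, so `g` is increasing on `[H_*, ∞)`, and
`g(H_*) − F²(1 − H_*) = ν(ν+1)H_*(2ν(ν+1)H_*² − F²) ≥ 0`. -/

noncomputable def fCubicNu (F nu H : ℝ) : ℝ :=
  2 * nu ^ 2 * (nu + 1) ^ 2 * H ^ 3 - F ^ 2 * (nu ^ 2 + nu + 1) * H + F ^ 2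

noncomputable def hstar (F nu : ℝ) : ℝ :=
  (-nu - 1 + Real.sqrt (8 * F ^ 2 * nu ^ 4 + nu ^ 2 + 2 * nu + 1)) * (1 / nu ^ 2) /
    (2 * (nu + 1))

lemma fCubic_one_div_sq {nu : ℝ} (hν : 0 < nu) (F H : ℝ) :
    fCubic F (1 / nu ^ 2) H = fCubicNu F nu H / nu ^ 4 := by
  have hsqrt : Real.sqrt (1 / nu ^ 2) = 1 / nu := by
    rw [one_div, Real.sqrt_inv, Real.sqrt_sq hν.le, one_div]
  unfold fCubic fCubicNu
  rw [hsqrt]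
  field_simp
  ring

lemma hstar_nonneg (F : ℝ) {nu : ℝ} (hν : 0 < nu) : 0 ≤ hstar F nu := by
  have hs : nu + 1 ≤ Real.sqrt (8 * F ^ 2 * nu ^ 4 + nu ^ 2 + 2 * nu + 1) :=
    Real.le_sqrt_of_sq_le (by nlinarith [sq_nonneg (F * nu ^ 2)])
  unfold hstar
  exact div_nonneg (mul_nonneg (by linarith) (by positivity)) (by positivity)

lemma hstar_isRoot (F : ℝ) {nu : ℝ} (hν : 0 < nu) :
    (nu + 1) ^ 2 * hstar F nu * (nu ^ 2 * hstar F nu + 1) = 2 * nu ^ 2 * F ^ 2 := by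
  have hs := Real.sq_sqrt (show 0 ≤ 8 * F ^ 2 * nu ^ 4 + nu ^ 2 + 2 * nu + 1 by positivity)
  unfold hstar
  generalize Real.sqrt (8 * F ^ 2 * nu ^ 4 + nu ^ 2 + 2 * nu + 1) = s at hs ⊢
  field_simp
  linear_combination hs

lemma cubic_sub_le_cubic_sub {a b x y : ℝ} (ha : 0 ≤ a) (hb : b ≤ 3 * a * x ^ 2)
    (hx : 0 ≤ x) (hxy : x ≤ y) : a * x ^ 3 - b * x ≤ a * y ^ 3 - b * y := by
  have h₁ : 0 ≤ (y - x) * (3 * a * x ^ 2 - b) := mul_nonneg (by linarith) (by linarith)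
  have h₂ : 0 ≤ a * ((y - x) ^ 2 * (y + 2 * x)) :=
    mul_nonneg ha (mul_nonneg (sq_nonneg _) (by linarith))
  nlinarith

section Root

variable {F nu h : ℝ}

lemma one_lt_sq_mul_of_isRoot (hh : 0 ≤ h)
    (hroot : (nu + 1) ^ 2 * h * (nu ^ 2 * h + 1) = 2 * nu ^ 2 * F ^ 2)
    (hν : 0 < nu) (hF : nu + 1 < F * nu ^ 2) : 1 < nu ^ 2 * h := by
  by_contra! hle
  have ht : nu ^ 2 * h * (nu ^ 2 * h + 1) ≤ 2 := by nlinarith [mul_nonneg (sq_nonneg nu) hh]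
  have hF' : (nu + 1) ^ 2 < (F * nu ^ 2) ^ 2 := by nlinarith
  have : (nu + 1) ^ 2 * (nu ^ 2 * h * (nu ^ 2 * h + 1)) = 2 * (F * nu ^ 2) ^ 2 := by
    linear_combination nu ^ 2 * hroot
  nlinarith [sq_nonneg (nu + 1)]

lemma lt_one_of_isRoot
    (hroot : (nu + 1) ^ 2 * h * (nu ^ 2 * h + 1) = 2 * nu ^ 2 * F ^ 2)
    (hν : 0 < nu) (hF : F ^ 2 < 4) : h < 1 := by
  by_contra! hle
  have hAMGM : 8 * nu ^ 2 ≤ (nu + 1) ^ 2 * (nu ^ 2 + 1) := by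
    nlinarith [sq_nonneg (nu - 1), mul_nonneg (sq_nonneg (nu - 1)) (sq_nonneg nu)]
  have hmono : (nu + 1) ^ 2 * 1 * (nu ^ 2 * 1 + 1) ≤ (nu + 1) ^ 2 * h * (nu ^ 2 * h + 1) := by
    gcongr
  nlinarith [mul_lt_mul_of_pos_left hF (pow_pos hν 2)]

lemma fCubicNu_le_of_isRoot
    (hroot : (nu + 1) ^ 2 * h * (nu ^ 2 * h + 1) = 2 * nu ^ 2 * F ^ 2)
    (hν : 1 ≤ nu) (h1 : 1 ≤ nu ^ 2 * h) {H : ℝ} (hH : h ≤ H) :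
    fCubicNu F nu h ≤ fCubicNu F nu H := by
  have hh : 0 ≤ h := (pos_of_mul_pos_right (one_pos.trans_le h1) (sq_nonneg nu)).le
  have ht : (nu ^ 2 * h + 1) * (nu ^ 2 + nu + 1) ≤ 12 * nu ^ 2 * (nu ^ 2 * h) := by
    nlinarith [mul_nonneg (sub_nonneg.2 h1) (sub_nonneg.2 hν)]
  have hderiv : F ^ 2 * (nu ^ 2 + nu + 1) ≤ 3 * (2 * nu ^ 2 * (nu + 1) ^ 2) * h ^ 2 := by
    refine le_of_mul_le_mul_left ?_ (by positivity : (0 : ℝ) < 2 * nu ^ 2)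
    calc 2 * nu ^ 2 * (F ^ 2 * (nu ^ 2 + nu + 1))
        = (nu + 1) ^ 2 * h * ((nu ^ 2 * h + 1) * (nu ^ 2 + nu + 1)) := by
          linear_combination -(nu ^ 2 + nu + 1) * hroot
      _ ≤ (nu + 1) ^ 2 * h * (12 * nu ^ 2 * (nu ^ 2 * h)) := by gcongr
      _ = 2 * nu ^ 2 * (3 * (2 * nu ^ 2 * (nu + 1) ^ 2) * h ^ 2) := by ring
  unfold fCubicNu
  linarith [cubic_sub_le_cubic_sub (by positivity) hderiv hh hH]

lemma sq_mul_one_sub_le_fCubicNu_of_isRoot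
    (hroot : (nu + 1) ^ 2 * h * (nu ^ 2 * h + 1) = 2 * nu ^ 2 * F ^ 2)
    (hν : 1 ≤ nu) (h1 : 1 ≤ nu ^ 2 * h) :
    F ^ 2 * (1 - h) ≤ fCubicNu F nu h := by
  have hh : 0 ≤ h := (pos_of_mul_pos_right (one_pos.trans_le h1) (sq_nonneg nu)).le
  have ht : (nu + 1) * (nu ^ 2 * h + 1) ≤ 4 * nu * (nu ^ 2 * h) := by
    nlinarith [mul_nonneg (sub_nonneg.2 h1) (sub_nonneg.2 hν)]
  have hF : F ^ 2 ≤ 2 * nu * (nu + 1) * h ^ 2 := by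
    refine le_of_mul_le_mul_left ?_ (by positivity : (0 : ℝ) < 2 * nu ^ 2)
    calc 2 * nu ^ 2 * F ^ 2
        = (nu + 1) * h * ((nu + 1) * (nu ^ 2 * h + 1)) := by linear_combination -hroot
      _ ≤ (nu + 1) * h * (4 * nu * (nu ^ 2 * h)) := by gcongr
      _ = 2 * nu ^ 2 * (2 * nu * (nu + 1) * h ^ 2) := by ring
  have hgap : fCubicNu F nu h - F ^ 2 * (1 - h) =
      nu * (nu + 1) * h * (2 * nu * (nu + 1) * h ^ 2 - F ^ 2) := by
    unfold fCubicNu; ring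
  nlinarith [mul_nonneg (by positivity : 0 ≤ nu * (nu + 1) * h) (sub_nonneg.2 hF)]

end Root

/-- In the discontinuous-profile regime, `f_{F,H_R}(H) ≥ F²H_R²(1−H_*) > 0` for all
`H ≥ H_*`. -/
theorem fCubic_pos_of_discont (F nu : ℝ) (hnu : 1 < nu)
    (hFlow : 1 / nu + 1 / nu ^ 2 < F) (hF2 : F < 2) :
    let HR := 1 / nu ^ 2
    let Hstar := (-nu - 1 + Real.sqrt (8 * F ^ 2 * nu ^ 4 + nu ^ 2 + 2 * nu + 1)) * HR /
      (2 * (nu + 1))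
    (∀ H : ℝ, Hstar ≤ H → F ^ 2 * HR ^ 2 * (1 - Hstar) ≤ fCubic F HR H) ∧
      0 < F ^ 2 * HR ^ 2 * (1 - Hstar) := by
  show (∀ H : ℝ, hstar F nu ≤ H →
      F ^ 2 * (1 / nu ^ 2) ^ 2 * (1 - hstar F nu) ≤ fCubic F (1 / nu ^ 2) H) ∧
    0 < F ^ 2 * (1 / nu ^ 2) ^ 2 * (1 - hstar F nu)
  have hν : 0 < nu := by linarith
  have hF : nu + 1 < F * nu ^ 2 := by
    have hsum : 1 / nu + 1 / nu ^ 2 = (nu + 1) / nu ^ 2 := by field_simp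
    rwa [hsum, div_lt_iff₀ (by positivity)] at hFlow
  have hF0 : 0 < F := lt_of_le_of_lt (by positivity) hFlow
  have hroot := hstar_isRoot F hν
  have hh := hstar_nonneg F hν
  have h1 := one_lt_sq_mul_of_isRoot hh hroot hν hF
  have hlt : 0 < 1 - hstar F nu := sub_pos.2 (lt_one_of_isRoot hroot hν (by nlinarith))
  refine ⟨fun H hH => ?_, by positivity⟩
  have hscale : F ^ 2 * (1 / nu ^ 2) ^ 2 * (1 - hstar F nu) =
      F ^ 2 * (1 - hstar F nu) / nu ^ 4 := by
    ring
  rw [hscale, fCubic_one_div_sq hν]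
  gcongr
  exact (sq_mul_one_sub_le_fCubicNu_of_isRoot hroot hnu.le h1.le).trans
    (fCubicNu_le_of_isRoot hroot hnu.le h1.le hH)
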